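/- For every r > 1 and M > 0 there exist C > 0 and M' > M such that for all 0 < s < t, all x ∈ ℝ, and all 0 < w < 1: ∫_{-∞}^{∞} (1+t-s)^{-1/2} exp(-|x-wy|²/(M(1+t-s))) (1+|y|+√s)^{-r} dy ≤ C[ (1+|x|+√(t-s)+√s)^{-r} + (1+t-s)^{-1/2} (1+s)^{-(r-1)/2} exp(-|x|²/(M'(1+t))) ]. -/

import Mathlib

/-!
Put `τ = 1 + t - s`. The weight integrates to
`∫ (1 + |y| + √s) ^ (-r) dy = 2 (1 + √s) ^ (1 - r) / (r - 1) ≤ 2 (1 + s) ^ (-(r - 1) / 2) / (r - 1)`.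
If `x ^ 2 ≤ 1 + t`, bounding the Gaussian by `1` gives the second term, since then
`exp (-x ^ 2 / (4 M (1 + t))) ≥ exp (-1 / (4 M))`.
If `x ^ 2 > 1 + t`, split the line at `|w y| = |x| / 2`. Near `0` the Gaussian is at most
`exp (-x ^ 2 / (4 M τ))`, which again gives the second term, with `M' = 4 M`. Far away the weight is
at most `(2 w / |x|) ^ r`, and the Gaussian integrates to `√(π M τ) / w`, which cancels `τ ^ (-1/2)`;
what remains is `≲ |x| ^ (-r)`, comparable to the first term because `1`, `√(t - s)` and `√s` are
all at most `|x|`.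
-/

open MeasureTheory Real Set Filter Topology

section AlgebraicWeight

variable {a c r : ℝ}

theorem integral_Ioi_add_rpow_neg (hc : 0 < c) (hr : 1 < r) :
    ∫ u in Ioi (0 : ℝ), (c + u) ^ (-r) = c ^ (1 - r) / (r - 1) := by
  have hderiv : ∀ u ∈ Ici (0 : ℝ),
      HasDerivAt (fun v => -(c + v) ^ (1 - r) / (r - 1)) ((c + u) ^ (-r)) u := by
    intro u hu
    have hcu : c + u ≠ 0 := by linarith [mem_Ici.mp hu]
    refine ((((hasDerivAt_id u).const_add c).rpow_const (p := 1 - r) (.inl hcu)).neg.div_const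
      (r - 1)).congr_deriv ?_
    rw [show 1 - r - 1 = -r by ring]
    field_simp [show r - 1 ≠ 0 by linarith]
    simp only [id]
    ring
  have htendsto : Tendsto (fun v => -(c + v) ^ (1 - r) / (r - 1)) atTop (𝓝 0) := by
    have h := ((tendsto_rpow_neg_atTop (by linarith : 0 < r - 1)).comp
      (tendsto_atTop_add_const_left atTop c tendsto_id)).neg.div_const (r - 1)
    simpa [Function.comp_def, show -(r - 1) = 1 - r by ring] using h
  rw [integral_Ioi_of_hasDerivAt_of_nonneg' hderiv
    (fun u hu => rpow_nonneg (by linarith [mem_Ioi.mp hu]) _) htendsto]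
  simp [neg_div]

theorem integrable_one_add_abs_add_rpow_neg (ha : 0 ≤ a) (hr : 1 < r) :
    Integrable fun y : ℝ => (1 + |y| + a) ^ (-r) := by
  have hpos (y : ℝ) : 0 < 1 + |y| + a := by positivity
  refine (integrable_one_add_norm (E := ℝ) (r := r) (by simpa using hr)).mono ?_
    (.of_forall fun y => ?_)
  · exact (((continuous_const.add continuous_abs).add continuous_const).rpow_const
      fun y => .inl (hpos y).ne').aestronglyMeasurable
  · rw [norm_of_nonneg (rpow_nonneg (hpos y).le _), norm_of_nonneg (by positivity), norm_eq_abs]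
    exact rpow_le_rpow_of_nonpos (by positivity) (by linarith) (by linarith)

theorem integral_one_add_abs_add_rpow_neg (ha : 0 ≤ a) (hr : 1 < r) :
    ∫ y : ℝ, (1 + |y| + a) ^ (-r) = 2 * (1 + a) ^ (1 - r) / (r - 1) := by
  simp_rw [add_right_comm (1 : ℝ) _ a]
  rw [integral_comp_abs (f := fun u => (1 + a + u) ^ (-r)),
    integral_Ioi_add_rpow_neg (by linarith) hr, mul_div_assoc]

theorem one_add_sqrt_rpow_le {s : ℝ} (hs : 0 ≤ s) (hr : 1 ≤ r) :
    (1 + √s) ^ (1 - r) ≤ (1 + s) ^ (-(r - 1) / 2) := by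
  have hsq : 1 + s ≤ (1 + √s) ^ (2 : ℝ) := by
    rw [rpow_two, add_sq, sq_sqrt hs]
    nlinarith [sqrt_nonneg s]
  calc (1 + √s) ^ (1 - r) = ((1 + √s) ^ (2 : ℝ)) ^ (-(r - 1) / 2) := by
        rw [← rpow_mul (by positivity)]; ring_nf
    _ ≤ (1 + s) ^ (-(r - 1) / 2) := rpow_le_rpow_of_nonpos (by linarith) hsq (by linarith)

theorem integral_one_add_abs_add_sqrt_rpow_neg_le {s : ℝ} (hs : 0 ≤ s) (hr : 1 < r) :
    ∫ y : ℝ, (1 + |y| + √s) ^ (-r) ≤ 2 / (r - 1) * (1 + s) ^ (-(r - 1) / 2) := by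
  rw [integral_one_add_abs_add_rpow_neg (sqrt_nonneg s) hr, mul_div_right_comm]
  gcongr
  exact one_add_sqrt_rpow_le hs hr.le

end AlgebraicWeight

section Gaussian

variable {b w x : ℝ}

theorem integrable_exp_neg_sq_sub_mul_div (hb : 0 < b) (hw : w ≠ 0) :
    Integrable fun y : ℝ => exp (-(x - w * y) ^ 2 / b) := by
  have h := ((integrable_exp_neg_mul_sq (inv_pos.2 hb)).comp_sub_right x).comp_mul_left' hw
  refine h.congr (.of_forall fun y => ?_)
  ring_nf

theorem integral_exp_neg_sq_sub_mul_div :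
    ∫ y : ℝ, exp (-(x - w * y) ^ 2 / b) = √(π * b) / |w| := by
  have h : (fun y : ℝ => exp (-(x - w * y) ^ 2 / b)) =
      fun y => (fun u => exp (-b⁻¹ * u ^ 2)) (w * y - x) := by
    funext y; congr 1; ring
  rw [h, Measure.integral_comp_mul_left (fun v => exp (-b⁻¹ * (v - x) ^ 2)),
    integral_sub_right_eq_self (fun u => exp (-b⁻¹ * u ^ 2)), integral_gaussian, smul_eq_mul,
    abs_inv, div_inv_eq_mul, inv_mul_eq_div]

end Gaussian

section GaussianTimesWeight

variable {a b r w x : ℝ}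

theorem integral_exp_mul_rpow_le_integral (hb : 0 ≤ b) (ha : 0 ≤ a) (hr : 1 < r) :
    ∫ y : ℝ, exp (-(x - w * y) ^ 2 / b) * (1 + |y| + a) ^ (-r) ≤
      ∫ y : ℝ, (1 + |y| + a) ^ (-r) :=
  integral_mono_of_nonneg (.of_forall fun y => by positivity)
    (integrable_one_add_abs_add_rpow_neg ha hr) (.of_forall fun y =>
      mul_le_of_le_one_left (by positivity)
        (exp_le_one_iff.2 (div_nonpos_of_nonpos_of_nonneg (by nlinarith) hb)))

theorem exp_mul_rpow_le_add (hx : x ≠ 0) (hw : 0 < w) (hb : 0 < b) (ha : 0 ≤ a) (hr : 0 ≤ r)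
    (y : ℝ) :
    exp (-(x - w * y) ^ 2 / b) * (1 + |y| + a) ^ (-r) ≤
      exp (-x ^ 2 / (4 * b)) * (1 + |y| + a) ^ (-r) +
        (2 * w / |x|) ^ r * exp (-(x - w * y) ^ 2 / b) := by
  rcases le_or_gt |w * y| (|x| / 2) with hy | hy
  · have hdist : |x| / 2 ≤ |x - w * y| := by linarith [abs_sub_abs_le_abs_sub x (w * y)]
    have hsq : x ^ 2 / 4 ≤ (x - w * y) ^ 2 := by
      nlinarith [sq_abs x, sq_abs (x - w * y), abs_nonneg x]
    have hexp : exp (-(x - w * y) ^ 2 / b) ≤ exp (-x ^ 2 / (4 * b)) := by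
      rw [exp_le_exp, neg_div, neg_div, neg_le_neg_iff, ← div_div]
      gcongr
    have hweight : 0 ≤ (1 + |y| + a) ^ (-r) := by positivity
    nlinarith [mul_le_mul_of_nonneg_right hexp hweight,
      mul_nonneg (by positivity : 0 ≤ (2 * w / |x|) ^ r) (exp_nonneg (-(x - w * y) ^ 2 / b))]
  · have hy' : |x| / (2 * w) ≤ 1 + |y| + a := by
      rw [abs_mul, abs_of_pos hw] at hy
      rw [div_le_iff₀ (by positivity)]
      nlinarith
    have hweight : (1 + |y| + a) ^ (-r) ≤ (2 * w / |x|) ^ r := by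
      calc (1 + |y| + a) ^ (-r) ≤ (|x| / (2 * w)) ^ (-r) :=
            rpow_le_rpow_of_nonpos (by positivity) hy' (by linarith)
        _ = (2 * w / |x|) ^ r := by rw [rpow_neg (by positivity), ← inv_rpow (by positivity),
            inv_div]
    nlinarith [mul_le_mul_of_nonneg_left hweight (exp_nonneg (-(x - w * y) ^ 2 / b)),
      mul_nonneg (exp_nonneg (-x ^ 2 / (4 * b))) (by positivity : 0 ≤ (1 + |y| + a) ^ (-r))]

theorem integral_exp_mul_rpow_le (hx : x ≠ 0) (hw : 0 < w) (hb : 0 < b) (ha : 0 ≤ a)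
    (hr : 1 < r) :
    ∫ y : ℝ, exp (-(x - w * y) ^ 2 / b) * (1 + |y| + a) ^ (-r) ≤
      exp (-x ^ 2 / (4 * b)) * (∫ y : ℝ, (1 + |y| + a) ^ (-r)) +
        (2 * w / |x|) ^ r * (√(π * b) / w) := by
  have hweight := (integrable_one_add_abs_add_rpow_neg ha hr).const_mul (exp (-x ^ 2 / (4 * b)))
  have hgauss := (integrable_exp_neg_sq_sub_mul_div (x := x) hb hw.ne').const_mul
    ((2 * w / |x|) ^ r)
  calc _ ≤ ∫ y : ℝ, (exp (-x ^ 2 / (4 * b)) * (1 + |y| + a) ^ (-r) +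
        (2 * w / |x|) ^ r * exp (-(x - w * y) ^ 2 / b)) :=
        integral_mono_of_nonneg (.of_forall fun y => by positivity) (hweight.add hgauss)
          (.of_forall (exp_mul_rpow_le_add hx hw hb ha (by linarith)))
    _ = _ := by
        rw [integral_add hweight hgauss, integral_const_mul, integral_const_mul,
          integral_exp_neg_sq_sub_mul_div, abs_of_pos hw]

end GaussianTimesWeight

theorem rpow_div_abs_div_le {r w : ℝ} (hw0 : 0 < w) (hw1 : w ≤ 1) (hr : 1 ≤ r) (x : ℝ) :
    (2 * w / |x|) ^ r / w ≤ 2 ^ r * |x| ^ (-r) := by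
  calc (2 * w / |x|) ^ r / w = 2 ^ r * w ^ (r - 1) * |x| ^ (-r) := by
        rw [div_rpow (by positivity) (abs_nonneg x), mul_rpow (by norm_num) hw0.le,
          rpow_sub_one hw0.ne', rpow_neg (abs_nonneg x)]
        ring
    _ ≤ 2 ^ r * 1 * |x| ^ (-r) := by
        gcongr
        exact rpow_le_one hw0.le hw1 (by linarith)
    _ = 2 ^ r * |x| ^ (-r) := by ring

theorem abs_rpow_neg_le {x u v r : ℝ} (hx : 1 ≤ |x|) (hu : u ≤ x ^ 2) (hv : v ≤ x ^ 2)
    (hr : 0 ≤ r) : |x| ^ (-r) ≤ 4 ^ r * (1 + |x| + √u + √v) ^ (-r) := by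
  have hsqrt {z : ℝ} (hz : z ≤ x ^ 2) : √z ≤ |x| := sqrt_sq_eq_abs x ▸ sqrt_le_sqrt hz
  have hsum : 1 + |x| + √u + √v ≤ 4 * |x| := by linarith [hsqrt hu, hsqrt hv]
  calc |x| ^ (-r) = 4 ^ r * (4 * |x|) ^ (-r) := by
        rw [mul_rpow (by norm_num) (abs_nonneg x), ← mul_assoc, ← rpow_add (by norm_num)]
        simp
    _ ≤ 4 ^ r * (1 + |x| + √u + √v) ^ (-r) :=
        mul_le_mul_of_nonneg_left (rpow_le_rpow_of_nonpos (by positivity) hsum (by linarith))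
          (by positivity)

section TwoTimeScales

variable {M r s t w x : ℝ}

theorem gaussian_conv_le_of_sq_le (hM : 0 < M) (hr : 1 < r) (hs : 0 ≤ s) (hst : s ≤ t)
    (hx : x ^ 2 ≤ 1 + t) :
    (1 + t - s) ^ (-(1:ℝ)/2) *
        ∫ y : ℝ, exp (-(x - w * y) ^ 2 / (M * (1 + t - s))) * (1 + |y| + √s) ^ (-r) ≤
      2 / (r - 1) * exp (1 / (4 * M)) *
        ((1 + t - s) ^ (-(1:ℝ)/2) * (1 + s) ^ (-(r - 1) / 2) *
          exp (-x ^ 2 / (4 * M * (1 + t)))) := by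
  have hτ : 0 < 1 + t - s := by linarith
  have hexp : 1 ≤ exp (1 / (4 * M)) * exp (-x ^ 2 / (4 * M * (1 + t))) := by
    rw [← exp_add, one_le_exp_iff, neg_div, ← sub_eq_add_neg, sub_nonneg,
      div_le_div_iff₀ (mul_pos (by positivity) (by linarith)) (by positivity)]
    nlinarith
  calc _ ≤ (1 + t - s) ^ (-(1:ℝ)/2) * (2 / (r - 1) * (1 + s) ^ (-(r - 1) / 2)) := by
        refine mul_le_mul_of_nonneg_left ?_ (rpow_nonneg hτ.le _)
        exact (integral_exp_mul_rpow_le_integral (by positivity) (sqrt_nonneg s) hr).trans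
          (integral_one_add_abs_add_sqrt_rpow_neg_le hs hr)
    _ = 2 / (r - 1) * ((1 + t - s) ^ (-(1:ℝ)/2) * (1 + s) ^ (-(r - 1) / 2)) * 1 := by ring
    _ ≤ 2 / (r - 1) * ((1 + t - s) ^ (-(1:ℝ)/2) * (1 + s) ^ (-(r - 1) / 2)) *
        (exp (1 / (4 * M)) * exp (-x ^ 2 / (4 * M * (1 + t)))) := by
        gcongr
    _ = _ := by ring

theorem gaussian_conv_le_of_lt_sq (hM : 0 < M) (hr : 1 < r) (hs : 0 ≤ s) (hst : s ≤ t)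
    (hw0 : 0 < w) (hw1 : w ≤ 1) (hx : 1 + t < x ^ 2) :
    (1 + t - s) ^ (-(1:ℝ)/2) *
        ∫ y : ℝ, exp (-(x - w * y) ^ 2 / (M * (1 + t - s))) * (1 + |y| + √s) ^ (-r) ≤
      2 / (r - 1) *
          ((1 + t - s) ^ (-(1:ℝ)/2) * (1 + s) ^ (-(r - 1) / 2) *
            exp (-x ^ 2 / (4 * M * (1 + t)))) +
        8 ^ r * √(π * M) * (1 + |x| + √(t - s) + √s) ^ (-r) := by
  set τ := 1 + t - s
  have hτ : 0 < τ := by linarith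
  have hx1 : 1 ≤ |x| := (one_lt_sq_iff_one_lt_abs x).1 (by linarith) |>.le
  have hexp : exp (-x ^ 2 / (4 * (M * τ))) ≤ exp (-x ^ 2 / (4 * M * (1 + t))) := by
    rw [exp_le_exp, neg_div, neg_div, neg_le_neg_iff, ← mul_assoc]
    gcongr
    linarith
  have hsqrt : τ ^ (-(1:ℝ)/2) * √(π * (M * τ)) = √(π * M) := by
    rw [← mul_assoc, sqrt_mul (by positivity), sqrt_eq_rpow τ, mul_left_comm, ← rpow_add hτ]
    norm_num
  calc _ ≤ τ ^ (-(1:ℝ)/2) *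
        (exp (-x ^ 2 / (4 * (M * τ))) * (∫ y : ℝ, (1 + |y| + √s) ^ (-r)) +
          (2 * w / |x|) ^ r * (√(π * (M * τ)) / w)) := by
        gcongr
        exact integral_exp_mul_rpow_le (abs_pos.1 (by linarith)) hw0 (by positivity)
          (sqrt_nonneg s) hr
    _ = τ ^ (-(1:ℝ)/2) * exp (-x ^ 2 / (4 * (M * τ))) * (∫ y : ℝ, (1 + |y| + √s) ^ (-r)) +
        (2 * w / |x|) ^ r / w * (τ ^ (-(1:ℝ)/2) * √(π * (M * τ))) := by ring
    _ ≤ τ ^ (-(1:ℝ)/2) * exp (-x ^ 2 / (4 * M * (1 + t))) *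
          (2 / (r - 1) * (1 + s) ^ (-(r - 1) / 2)) +
        2 ^ r * (4 ^ r * (1 + |x| + √(t - s) + √s) ^ (-r)) * √(π * M) := by
        rw [hsqrt]
        gcongr
        · exact integral_one_add_abs_add_sqrt_rpow_neg_le hs hr
        · exact (rpow_div_abs_div_le hw0 hw1 hr.le x).trans
            (by gcongr; exact abs_rpow_neg_le hx1 (by linarith) (by linarith) (by linarith))
    _ = _ := by
        rw [show (8 : ℝ) = 2 * 4 by norm_num, mul_rpow (by norm_num) (by norm_num)]
        ring

end TwoTimeScales

/-- Two-time-scale scaled Gaussian convolution bound against combined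
spatial-temporal algebraic decay. -/
theorem scaled_gaussian_conv_two_times (r M : ℝ) (hr : 1 < r) (hM : 0 < M) :
    ∃ C > (0:ℝ), ∃ M' > M, ∀ s t : ℝ, 0 < s → s < t → ∀ x w : ℝ, 0 < w → w < 1 →
      (∫ y : ℝ, (1 + t - s) ^ (-(1:ℝ)/2) * Real.exp (-(x - w*y)^2 / (M*(1+t-s))) *
          (1 + |y| + Real.sqrt s) ^ (-r)) ≤
        C * ((1 + |x| + Real.sqrt (t - s) + Real.sqrt s) ^ (-r) +
          (1 + t - s) ^ (-(1:ℝ)/2) * (1 + s) ^ (-(r-1)/2) *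
            Real.exp (-x^2 / (M'*(1+t)))) := by
  have hr1 : 0 < r - 1 := by linarith
  refine ⟨2 / (r - 1) * exp (1 / (4 * M)) + 2 / (r - 1) + 8 ^ r * √(π * M), by positivity,
    4 * M, by linarith, fun s t hs hst x w hw0 hw1 => ?_⟩
  have hτ_pow : 0 ≤ (1 + t - s) ^ (-(1:ℝ)/2) := rpow_nonneg (by linarith) _
  have hT1 : 0 ≤ (1 + |x| + √(t - s) + √s) ^ (-r) := by positivity
  have hT2 : 0 ≤ (1 + t - s) ^ (-(1:ℝ)/2) * (1 + s) ^ (-(r - 1) / 2) *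
      exp (-x ^ 2 / (4 * M * (1 + t))) := by positivity
  conv_lhs => simp only [mul_assoc, integral_const_mul]
  rcases le_or_gt (x ^ 2) (1 + t) with hx | hx
  · refine (gaussian_conv_le_of_sq_le hM hr hs.le hst.le hx).trans ?_
    nlinarith [mul_nonneg (by positivity : 0 ≤ 2 / (r - 1) + 8 ^ r * √(π * M)) hT2,
      mul_nonneg (by positivity : 0 ≤ 2 / (r - 1) * exp (1 / (4 * M)) + 2 / (r - 1) +
        8 ^ r * √(π * M)) hT1]
  · refine (gaussian_conv_le_of_lt_sq hM hr hs.le hst.le hw0 hw1.le hx).trans ?_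
    nlinarith [mul_nonneg (by positivity : 0 ≤ 2 / (r - 1) * exp (1 / (4 * M)) +
        8 ^ r * √(π * M)) hT2,
      mul_nonneg (by positivity : 0 ≤ 2 / (r - 1) * exp (1 / (4 * M)) + 2 / (r - 1)) hT1]
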